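/- Let G be a residually finite group with trivial finite radical, and let H be a finite-index subgroup of G. If every finite-index subgroup of H is just infinite, then every finite-index subgroup of G is just infinite. -/

import Mathlib

def ResiduallyFinite (G : Type*) [Group G] : Prop :=
  sInf {N : Subgroup G | N.Normal ∧ N.FiniteIndex} = ⊥

def JustInfinite (G : Type*) [Group G] : Prop :=
  Infinite G ∧ ResiduallyFinite G ∧
    ∀ N : Subgroup G, N.Normal → N ≠ ⊥ → N.FiniteIndex

def FinRadical (G : Type*) [Group G] : Set G :=
  { x | ∃ N : Subgroup G, N.Normal ∧ (N : Set G).Finite ∧ x ∈ N }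

def VirtuallyAbelian (G : Type*) [Group G] : Prop :=
  ∃ H : Subgroup G, H.FiniteIndex ∧ ∀ a b : H, a * b = b * a

def conjugatesSet (G : Type*) [Group G] (B : Subgroup G) : Set (Subgroup G) :=
  { C | ∃ g : G, B.map (MulAut.conj g).toMonoidHom = C }

def IsBasal (G : Type*) [Group G] (B : Subgroup G) : Prop :=
  B ≠ ⊥ ∧ (conjugatesSet G B).Finite ∧
  (∀ C ∈ conjugatesSet G B, ∀ D ∈ conjugatesSet G B, C ≠ D →
      C ⊓ D = ⊥ ∧ ∀ x ∈ C, ∀ y ∈ D, Commute x y) ∧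
  iSupIndep (fun C : conjugatesSet G B => (C : Subgroup G)) ∧
  (⨆ C ∈ conjugatesSet G B, C) = Subgroup.normalClosure (B : Set G)

/-!
Let `C` be the normal core of `H` and `K` a finite-index subgroup of `G`. Then `L = K ∩ C` is
normal of finite index in `K` and, having finite index in `H`, is just infinite. A nontrivial
normal subgroup `N` of `K` either meets `L` nontrivially, and then has finite index because `L`
is just infinite, or meets it trivially, and then `N` is finite and centralizes `L`. In the
latter case each `x ∈ N` has finite order and centralizes a finite-index normal subgroup `E` of
`G`. Then the normal closure `W` of `x` is generated by the finitely many conjugates of `x` and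
its centre contains `W ∩ E`, so it has finite index; by Schur's theorem `[W, W]` is finite, and
`W / [W, W]` is a finitely generated abelian torsion group. Hence `W` is a finite normal subgroup
of `G`, and `Fin(G) = 1` forces `x = 1`.
-/

open Subgroup
open scoped commutatorElement

section Schur

variable {W : Type*} [Group W]

theorem commutatorElement_mul_mem_center_left {a c z : W} (hz : z ∈ center W) :
    ⁅a * z, c⁆ = ⁅a, c⁆ := by
  rw [mem_center_iff] at hz
  rw [commutatorElement_def, commutatorElement_def, mul_assoc a z c, ← hz c]
  group

theorem commutatorElement_mul_mem_center {a b z w : W} (hz : z ∈ center W) (hw : w ∈ center W) :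
    ⁅a * z, b * w⁆ = ⁅a, b⁆ := by
  rw [commutatorElement_mul_mem_center_left hz, ← commutatorElement_inv,
    commutatorElement_mul_mem_center_left hw, commutatorElement_inv]

theorem finite_commutatorSet_of_finiteIndex_center [(center W).FiniteIndex] :
    (commutatorSet W).Finite := by
  refine (Set.finite_range fun p : (W ⧸ center W) × (W ⧸ center W) =>
    ⁅p.1.out, p.2.out⁆).subset ?_
  rintro _ ⟨a, b, rfl⟩
  obtain ⟨z, hz⟩ := QuotientGroup.mk_out_eq_mul (center W) a
  obtain ⟨w, hw⟩ := QuotientGroup.mk_out_eq_mul (center W) b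
  exact ⟨(a, b), by simp only [hz, hw, commutatorElement_mul_mem_center z.2 w.2]⟩

theorem finite_of_finiteIndex_center_of_closure_eq_top [(center W).FiniteIndex] {S : Set W}
    (hS : S.Finite) (hcl : closure S = ⊤) (htor : ∀ s ∈ S, IsOfFinOrder s) : Finite W := by
  -- Schur's theorem, a Mathlib instance, turns this into finiteness of `commutator W`.
  have : Finite (commutatorSet W) := finite_commutatorSet_of_finiteIndex_center
  have hsurj : Function.Surjective (Abelianization.of (G := W)) := QuotientGroup.mk_surjective
  have hab : closure (Abelianization.of '' S) = ⊤ := by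
    rw [← MonoidHom.map_closure, hcl, ← MonoidHom.range_eq_map,
      MonoidHom.range_eq_top_of_surjective _ hsurj]
  have : Group.FG (Abelianization W) := Group.fg_iff.mpr ⟨_, hab, hS.image _⟩
  have htorAb : IsMulTorsion (Abelianization W) := by
    rw [← CommGroup.torsion_eq_top_iff, eq_top_iff, ← hab, closure_le]
    rintro _ ⟨s, hs, rfl⟩
    exact Abelianization.of.isOfFinOrder (htor s hs)
  have : Finite (W ⧸ commutator W) :=
    CommGroup.finite_of_fg_isMulTorsion (Abelianization W) htorAb
  exact (finite_iff_finite_and_finiteIndex (commutator W)).mpr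
    ⟨inferInstance, finiteIndex_of_finite_quotient⟩

end Schur

section FinRadical

variable {G : Type*} [Group G]

theorem finite_conjugatesOf {x : G} [(centralizer {x}).FiniteIndex] :
    (conjugatesOf x).Finite := by
  refine (Set.finite_range fun q : G ⧸ centralizer {x} => q.out * x * q.out⁻¹).subset ?_
  rintro _ hy
  obtain ⟨g, rfl⟩ := isConj_iff.mp hy
  obtain ⟨h, hh⟩ := QuotientGroup.mk_out_eq_mul (centralizer {x}) g
  refine ⟨g, ?_⟩
  have hhx : (h : G) * x = x * h := mem_centralizer_singleton_iff.mp h.2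
  dsimp only
  rw [hh, mul_assoc g, hhx]
  group

theorem finite_normalClosure_singleton {E : Subgroup G} [E.Normal] [E.FiniteIndex] {x : G}
    (hx : IsOfFinOrder x) (hxE : x ∈ centralizer (E : Set G)) :
    (normalClosure {x} : Set G).Finite := by
  have : (centralizer {x}).FiniteIndex := finiteIndex_of_le fun e he =>
    mem_centralizer_singleton_iff.mpr (mem_centralizer_iff.mp hxE e he)
  set W := normalClosure {x}
  have hWE : W ≤ centralizer (E : Set G) :=
    normalClosure_le_normal (Set.singleton_subset_iff.mpr hxE)
  have : (center W).FiniteIndex := by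
    refine finiteIndex_of_le (H := E.subgroupOf W) fun e he => mem_center_iff.mpr fun w => ?_
    exact Subtype.ext (mem_centralizer_iff.mp (hWE w.2) e he).symm
  have hS : Group.conjugatesOfSet {x} = conjugatesOf x := by simp [Group.conjugatesOfSet]
  have hgen : closure (((↑) : W → G) ⁻¹' Group.conjugatesOfSet {x}) = ⊤ :=
    closure_closure_coe_preimage
  have : Finite W := finite_of_finiteIndex_center_of_closure_eq_top
    ((hS ▸ finite_conjugatesOf).preimage Subtype.val_injective.injOn) hgen
    fun t ht => by
      obtain ⟨_, rfl, hconj⟩ := Group.mem_conjugatesOfSet_iff.mp ht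
      exact Submonoid.isOfFinOrder_coe.mp (hconj.isOfFinOrder hx)
  exact Set.toFinite (W : Set G)

theorem eq_one_of_isOfFinOrder_of_mem_centralizer (hfr : FinRadical G = {1}) {E : Subgroup G}
    [E.Normal] [E.FiniteIndex] {x : G} (hx : IsOfFinOrder x) (hxE : x ∈ centralizer (E : Set G)) :
    x = 1 := by
  have hmem : x ∈ FinRadical G := ⟨normalClosure {x}, normalClosure_normal,
    finite_normalClosure_singleton hx hxE, subset_normalClosure rfl⟩
  rwa [hfr] at hmem

end FinRadical

section JustInfinite

variable {G G' : Type*} [Group G] [Group G']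

theorem ResiduallyFinite.of_injective {f : G →* G'} (hf : Function.Injective f)
    (h : ResiduallyFinite G') : ResiduallyFinite G := by
  refine eq_bot_iff.mpr fun x hx => mem_bot.mpr (hf ?_)
  have hfx : f x ∈ sInf {N : Subgroup G' | N.Normal ∧ N.FiniteIndex} :=
    mem_sInf.mpr fun N ⟨hN, _⟩ => mem_sInf.mp hx (N.comap f)
      ⟨hN.comap f, ⟨by rw [index_comap]; exact FiniteIndex.index_ne_zero⟩⟩
  rw [h, mem_bot] at hfx
  rw [hfx, map_one]

theorem JustInfinite.of_mulEquiv (e : G ≃* G') (h : JustInfinite G) : JustInfinite G' := by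
  obtain ⟨hinf, hrf, hji⟩ := h
  refine ⟨e.toEquiv.infinite_iff.mp hinf, hrf.of_injective (f := e.symm.toMonoidHom)
    e.symm.injective, fun N hN hN1 => ?_⟩
  have hsurj : Function.Surjective e.toMonoidHom := e.surjective
  have hcomap : N.comap e.toMonoidHom ≠ ⊥ := fun hbot => hN1 <| by
    rw [← map_comap_eq_self_of_surjective hsurj N, hbot, Subgroup.map_bot]
  have := hji _ (hN.comap _) hcomap
  exact ⟨by rw [← index_comap_of_surjective N hsurj]; exact this.index_ne_zero⟩

variable {L N : Subgroup G}

theorem finiteIndex_of_inf_ne_bot [L.FiniteIndex] (hL : JustInfinite L) [N.Normal]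
    (hNL : N ⊓ L ≠ ⊥) : N.FiniteIndex := by
  have hNL' : N.subgroupOf L ≠ ⊥ := by
    rwa [Ne, subgroupOf_eq_bot, disjoint_iff]
  have := hL.2.2 _ normal_subgroupOf hNL'
  rw [finiteIndex_iff, ← relIndex_top_right]
  exact relIndex_ne_zero_trans this.index_ne_zero (by
    rw [relIndex_top_right]; exact FiniteIndex.index_ne_zero)

theorem finite_of_inf_eq_bot [L.Normal] [L.FiniteIndex] (hNL : N ⊓ L = ⊥) : Finite N := by
  refine Nat.finite_of_card_ne_zero fun h => FiniteIndex.index_ne_zero (H := L) ?_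
  have hrel : L.relIndex N = 0 := by
    rw [← inf_relIndex_right, inf_comm, hNL, relIndex_bot_left, h]
  exact Nat.eq_zero_of_zero_dvd (hrel ▸ relIndex_dvd_index_of_normal L N)

theorem le_centralizer_of_inf_eq_bot [N.Normal] [L.Normal] (hNL : N ⊓ L = ⊥) :
    N ≤ centralizer (L : Set G) := fun x hx =>
  mem_centralizer_iff.mpr fun y hy =>
    (commute_of_normal_of_disjoint N L ‹_› ‹_› (disjoint_iff.mpr hNL) x y hx hy).eq.symm

theorem JustInfinite.of_finiteIndex_normal (hG : ResiduallyFinite G) [L.Normal] [L.FiniteIndex]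
    (hL : JustInfinite L)
    (hfin : ∀ N : Subgroup G, N.Normal → Finite N → N ≤ centralizer (L : Set G) → N = ⊥) :
    JustInfinite G := by
  have := hL.1
  refine ⟨Infinite.of_injective _ L.subtype_injective, hG, fun N hN hN1 => ?_⟩
  by_cases hNL : N ⊓ L = ⊥
  · exact absurd (hfin N hN (finite_of_inf_eq_bot hNL) (le_centralizer_of_inf_eq_bot hNL)) hN1
  · exact finiteIndex_of_inf_ne_bot hL hNL

end JustInfinite

/-- If G is residually finite with trivial finite radical and has a
hereditarily just infinite subgroup of finite index, then G is
hereditarily just infinite. -/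
theorem hereditarilyJustInfinite_of_finiteIndex {G : Type*} [Group G]
    (hrf : ResiduallyFinite G) (hfr : FinRadical G = {1})
    (H : Subgroup G) (hH : H.FiniteIndex)
    (hhji : ∀ K : Subgroup H, K.FiniteIndex → JustInfinite K) :
    ∀ K : Subgroup G, K.FiniteIndex → JustInfinite K := by
  intro K hK
  set C := H.normalCore
  have hCH : K ⊓ C ≤ H := inf_le_right.trans H.normalCore_le
  have hJI : JustInfinite ((K ⊓ C).subgroupOf K) :=
    ((hhji _ inferInstance).of_mulEquiv (subgroupOfEquivOfLe hCH)).of_mulEquiv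
      (subgroupOfEquivOfLe inf_le_left).symm
  have : ((K ⊓ C).subgroupOf K).Normal := inf_subgroupOf_left C K ▸ normal_subgroupOf
  refine hJI.of_finiteIndex_normal (hrf.of_injective K.subtype_injective) fun N _ _ hNL => ?_
  refine eq_bot_iff.mpr fun x hx => mem_bot.mpr (Subtype.ext ?_)
  have hxfin : IsOfFinOrder (x : G) :=
    Submonoid.isOfFinOrder_coe.mpr <| Submonoid.isOfFinOrder_coe.mpr <|
      isOfFinOrder_of_finite (⟨x, hx⟩ : N)
  have hxE : (x : G) ∈ centralizer ((K.normalCore ⊓ C : Subgroup G) : Set G) := by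
    refine mem_centralizer_iff.mpr fun e he => ?_
    have heK : e ∈ K := K.normalCore_le he.1
    have hL : (⟨e, heK⟩ : K) ∈ (K ⊓ C).subgroupOf K := mem_subgroupOf.mpr ⟨heK, he.2⟩
    exact congrArg Subtype.val (mem_centralizer_iff.mp (hNL hx) _ hL)
  exact eq_one_of_isOfFinOrder_of_mem_centralizer hfr hxfin hxE
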